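/- arXiv:2506.17883 — 2 statements merged into one kernel-verified Lean document; each statement's English description precedes it below -/
import Mathlib

section
/- Suppose (r,θ) ∈ ℝ^d × ℝ^d satisfies ‖r‖ = 1 and Σ_{P∈G₂} φ_P(r,θ)² ≤ ε/2ⁿ for some 0 ≤ ε ≤ 1/4. Let h₀ = (1/2ⁿ) Σ_{P diagonal n-qubit Pauli string} tr(K(r,θ)† H K(r,θ) P) · P and set H̃ = K(r,θ) h₀ K(r,θ)†. Then ‖H − H̃‖₂ ≤ 2·√(F(r,θ)/2ⁿ) + 9·‖H‖_F·√ε, where ‖·‖₂ denotes the spectral (operator) norm and ‖·‖_F the Frobenius norm. -/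
open Matrix Complex
open scoped Classical

noncomputable section

/-- Single-qubit Pauli matrices: `0 ↦ I`, `1 ↦ X`, `2 ↦ Y`, `3 ↦ Z`. -/
def pauli1 (a : Fin 4) : Matrix (Fin 2) (Fin 2) ℂ :=
  if a = 0 then 1
  else if a = 1 then !![0, 1; 1, 0]
  else if a = 2 then !![0, -Complex.I; Complex.I, 0]
  else !![1, 0; 0, -1]

/-- The `n`-qubit Pauli string `σ^{(1)} ⊗ ⋯ ⊗ σ^{(n)}` associated to `s : Fin n → Fin 4`,
realized as a matrix on the `(Fin n → Fin 2)`-indexed space of dimension `2^n`. -/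
def pauliOp {n : ℕ} (s : Fin n → Fin 4) :
    Matrix (Fin n → Fin 2) (Fin n → Fin 2) ℂ :=
  Matrix.of fun i j => ∏ k, pauli1 (s k) (i k) (j k)

/-- `G₁`: the off-diagonal Pauli strings (some factor is `X` or `Y`). -/
def G1 (n : ℕ) : Finset (Fin n → Fin 4) :=
  Finset.univ.filter fun s => ∃ k, s k = 1 ∨ s k = 2

/-- The diagonal Pauli strings (every factor is `I` or `Z`). -/
def DiagStrings (n : ℕ) : Finset (Fin n → Fin 4) :=
  Finset.univ.filter fun s => ∀ k, s k = 0 ∨ s k = 3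

variable {n d : ℕ}

/-- `K(r,θ) = Σ_j r_j e^{iθ_j} P_j`. -/
def Kmat (P : Fin d → Fin n → Fin 4) (x : (Fin d → ℝ) × (Fin d → ℝ)) :
    Matrix (Fin n → Fin 2) (Fin n → Fin 2) ℂ :=
  ∑ j, ((x.1 j : ℂ) * Complex.exp (Complex.I * (x.2 j : ℂ))) • pauliOp (P j)

/-- The cost function `f(r,θ) = Σ_{P ∈ G₁} tr(K(r,θ)† H K(r,θ) P)²` (the traces being real). -/
def costf (H : Matrix (Fin n → Fin 2) (Fin n → Fin 2) ℂ)
    (P : Fin d → Fin n → Fin 4) (x : (Fin d → ℝ) × (Fin d → ℝ)) : ℝ :=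
  ∑ Q ∈ G1 n, (((Kmat P x)ᴴ * H * Kmat P x * pauliOp Q).trace.re) ^ 2

/-- `φ_P(r,θ) = 2^{-n} tr(K(r,θ)† K(r,θ) P)` (real). -/
def phi (P : Fin d → Fin n → Fin 4) (Q : Fin n → Fin 4)
    (x : (Fin d → ℝ) × (Fin d → ℝ)) : ℝ :=
  (1 / 2 ^ n) * ((Kmat P x)ᴴ * Kmat P x * pauliOp Q).trace.re

/-- `G₂`: non-identity Pauli strings `Q` with `P_i P_j ∈ {Q, -Q, iQ, -iQ}` for some `i, j`. -/
def G2 (P : Fin d → Fin n → Fin 4) : Finset (Fin n → Fin 4) :=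
  Finset.univ.filter fun Q => Q ≠ (fun _ => 0) ∧ ∃ i j : Fin d, ∃ c : ℂ,
    (c = 1 ∨ c = -1 ∨ c = Complex.I ∨ c = -Complex.I) ∧
    pauliOp (P i) * pauliOp (P j) = c • pauliOp Q

/-- The total cost function `F = f + Σ_{P ∈ G₂} φ_P²`. -/
def totalF (H : Matrix (Fin n → Fin 2) (Fin n → Fin 2) ℂ)
    (P : Fin d → Fin n → Fin 4) (x : (Fin d → ℝ) × (Fin d → ℝ)) : ℝ :=
  costf H P x + ∑ Q ∈ G2 P, phi P Q x ^ 2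

end

noncomputable section

/-- `h₀(r,θ) = 2^{-n} Σ_{P diagonal} tr(K†HK P) · P`. -/
def h0 {n d : ℕ} (H : Matrix (Fin n → Fin 2) (Fin n → Fin 2) ℂ)
    (P : Fin d → Fin n → Fin 4) (x : (Fin d → ℝ) × (Fin d → ℝ)) :
    Matrix (Fin n → Fin 2) (Fin n → Fin 2) ℂ :=
  ((2 : ℂ) ^ n)⁻¹ •
    ∑ Q ∈ DiagStrings n, ((Kmat P x)ᴴ * H * Kmat P x * pauliOp Q).trace • pauliOp Q

/-- The spectral (operator) norm of a complex matrix, i.e. the operator norm of the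
induced map on the Euclidean space `ℓ²`. -/
def specNorm {m : Type*} [Fintype m] [DecidableEq m] (M : Matrix m m ℂ) : ℝ :=
  ‖Matrix.toEuclideanCLM (𝕜 := ℂ) M‖

/-- The Frobenius norm of a complex matrix. -/
def frobNorm {m : Type*} [Fintype m] (M : Matrix m m ℂ) : ℝ :=
  Real.sqrt (∑ i, ∑ j, ‖M i j‖ ^ 2)

end

/-!
Write `K = K(r,θ)`, `M = K† H K`, `D = diag M` and `E = K† K - 1`; then `h₀ = D`, since the diagonal
Pauli strings span the diagonal matrices. The Pauli strings are orthogonal for the trace form, so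
Parseval's identity turns the cost terms into Frobenius norms: the Pauli coefficients of `E` live
on `G₂` and those of `M - D` on `G₁`, whence `‖E‖_F² = 2ⁿ Σ_{G₂} φ_P² ≤ ε` and
`f = 2ⁿ ‖M - D‖_F²`. Thus `‖E‖ ≤ √ε ≤ 1/2`, so `K` is invertible with `‖K⁻¹‖² ≤ (1 - ‖E‖)⁻¹ ≤ 2`
(Neumann series for `(K† K)⁻¹`), and `‖D‖ ≤ ‖M‖ ≤ ‖K‖² ‖H‖ ≤ (3/2) ‖H‖_F`. Finally
`K† (H - K D K†) K = (M - D) - (E D + D E + E D E)`, and undoing this congruence costs the factor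
`‖K⁻¹‖² ≤ 2`.
-/

open scoped Matrix.Norms.L2Operator ComplexConjugate

namespace Matrix

variable {ι m R : Type*} [Fintype ι] [CommSemiring R]

def piTensor (A : ι → Matrix m m R) : Matrix (ι → m) (ι → m) R :=
  of fun i j => ∏ k, A k (i k) (j k)

theorem piTensor_mul [Fintype m] [DecidableEq ι] (A B : ι → Matrix m m R) :
    piTensor A * piTensor B = piTensor fun k => A k * B k := by
  ext i j
  simp only [piTensor, mul_apply, of_apply, ← Finset.prod_mul_distrib]
  exact (Fintype.prod_sum fun k b => A k (i k) b * B k b (j k)).symm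

theorem piTensor_smul (c : ι → R) (A : ι → Matrix m m R) :
    piTensor (fun k => c k • A k) = (∏ k, c k) • piTensor A := by
  ext i j
  simp [piTensor, Finset.prod_mul_distrib]

theorem trace_piTensor [Fintype m] [DecidableEq ι] (A : ι → Matrix m m R) :
    trace (piTensor A) = ∏ k, trace (A k) := by
  simp only [trace, diag, piTensor, of_apply]
  exact (Fintype.prod_sum fun k b => A k b b).symm

theorem conjTranspose_piTensor [StarRing R] (A : ι → Matrix m m R) :
    (piTensor A)ᴴ = piTensor fun k => (A k)ᴴ := by
  ext i j
  simp [piTensor, conjTranspose_apply]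

theorem piTensor_one [DecidableEq m] [DecidableEq (ι → m)] :
    piTensor (fun _ : ι => (1 : Matrix m m R)) = 1 := by
  ext i j
  simp only [piTensor, of_apply, one_apply, Finset.prod_ite_zero, Finset.prod_const_one,
    funext_iff, Finset.mem_univ, true_implies]

end Matrix

theorem frobNorm_sq {m : Type*} [Fintype m] (A : Matrix m m ℂ) :
    frobNorm A ^ 2 = ∑ i, ∑ j, ‖A i j‖ ^ 2 :=
  Real.sq_sqrt (by positivity)

theorem frobNorm_nonneg {m : Type*} [Fintype m] (A : Matrix m m ℂ) : 0 ≤ frobNorm A :=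
  Real.sqrt_nonneg _

namespace Matrix

variable {m : Type*} [Fintype m] [DecidableEq m]

theorem l2_opNorm_le_frobNorm (A : Matrix m m ℂ) : ‖A‖ ≤ frobNorm A := by
  rw [cstar_norm_def]
  refine ContinuousLinearMap.opNorm_le_bound _ (frobNorm_nonneg A) fun v => ?_
  refine (sq_le_sq₀ (norm_nonneg _) (mul_nonneg (frobNorm_nonneg A) (norm_nonneg _))).mp ?_
  rw [mul_pow, frobNorm_sq, EuclideanSpace.norm_sq_eq, EuclideanSpace.norm_sq_eq, Finset.sum_mul]
  refine Finset.sum_le_sum fun i _ => ?_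
  simp only [ofLp_toEuclideanCLM, mulVec, dotProduct]
  calc ‖∑ j, A i j * v j‖ ^ 2 ≤ (∑ j, ‖A i j‖ * ‖v j‖) ^ 2 := by
        gcongr
        exact (norm_sum_le _ _).trans_eq (by simp only [norm_mul])
    _ ≤ (∑ j, ‖A i j‖ ^ 2) * ∑ j, ‖v j‖ ^ 2 := Finset.sum_mul_sq_le_sq_mul_sq _ _ _

theorem l2_opNorm_diagonal_diag_le (A : Matrix m m ℂ) : ‖diagonal fun i => A i i‖ ≤ ‖A‖ := by
  rw [l2_opNorm_diagonal]
  refine (pi_norm_le_iff_of_nonneg (norm_nonneg A)).mpr fun i => ?_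
  calc ‖A i i‖ = ‖toEuclideanCLM (𝕜 := ℂ) A (WithLp.toLp 2 (Pi.single i 1)) i‖ := by
        simp [mulVec_single]
    _ ≤ ‖toEuclideanCLM (𝕜 := ℂ) A (WithLp.toLp 2 (Pi.single i 1))‖ := PiLp.norm_apply_le _ _
    _ ≤ ‖A‖ := by
        grw [ContinuousLinearMap.le_opNorm]
        simp [cstar_norm_def]

theorem l2_opNorm_one_le : ‖(1 : Matrix m m ℂ)‖ ≤ 1 := by
  rw [cstar_norm_def, map_one]
  exact ContinuousLinearMap.norm_id_le

theorem isUnit_of_norm_conjTranspose_mul_self_sub_one_lt {K : Matrix m m ℂ}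
    (h : ‖Kᴴ * K - 1‖ < 1) : IsUnit K := by
  have hKK := (Units.oneSub (1 - Kᴴ * K) (by rwa [norm_sub_rev])).isUnit
  rw [Units.val_oneSub, sub_sub_cancel] at hKK
  rw [isUnit_iff_isUnit_det] at hKK ⊢
  rw [det_mul] at hKK
  exact isUnit_of_mul_isUnit_right hKK

theorem l2_opNorm_nonsing_inv_mul_self_le {K : Matrix m m ℂ} (h : ‖Kᴴ * K - 1‖ < 1) :
    ‖K⁻¹‖ * ‖K⁻¹‖ ≤ (1 - ‖Kᴴ * K - 1‖)⁻¹ := by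
  have h' : ‖1 - Kᴴ * K‖ < 1 := by rwa [norm_sub_rev]
  have hinv : K⁻¹ * (K⁻¹)ᴴ = ∑' k : ℕ, (1 - Kᴴ * K) ^ k := by
    rw [geom_series_eq_inverse _ h', sub_sub_cancel, ← nonsing_inv_eq_ringInverse,
      mul_inv_rev, conjTranspose_nonsing_inv]
  rw [← CStarRing.norm_self_mul_star, star_eq_conjTranspose, hinv, ← norm_sub_rev]
  linarith [tsum_geometric_le_of_norm_lt_one _ h', l2_opNorm_one_le (m := m)]

theorem l2_opNorm_mul_self_le_one_add (K : Matrix m m ℂ) : ‖K‖ * ‖K‖ ≤ 1 + ‖Kᴴ * K - 1‖ := by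
  rw [← l2_opNorm_conjTranspose_mul_self]
  calc ‖Kᴴ * K‖ = ‖1 + (Kᴴ * K - 1)‖ := by rw [add_sub_cancel]
    _ ≤ 1 + ‖Kᴴ * K - 1‖ := (norm_add_le _ _).trans (by gcongr; exact l2_opNorm_one_le)

theorem l2_opNorm_conjTranspose_mul_mul_le (K H : Matrix m m ℂ) :
    ‖Kᴴ * H * K‖ ≤ (1 + ‖Kᴴ * K - 1‖) * ‖H‖ := by
  grw [norm_mul₃_le, l2_opNorm_conjTranspose, ← l2_opNorm_mul_self_le_one_add]
  linarith

theorem l2_opNorm_le_nonsing_inv_sq_mul_congr {K : Matrix m m ℂ} (hK : IsUnit K)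
    (X : Matrix m m ℂ) : ‖X‖ ≤ ‖K⁻¹‖ * ‖K⁻¹‖ * ‖Kᴴ * X * K‖ := by
  have hdet := (isUnit_iff_isUnit_det K).mp hK
  have h₁ : (K⁻¹)ᴴ * Kᴴ = 1 := by
    rw [← conjTranspose_mul, mul_nonsing_inv _ hdet, conjTranspose_one]
  have h₂ : K * K⁻¹ = 1 := mul_nonsing_inv _ hdet
  calc ‖X‖ = ‖(K⁻¹)ᴴ * (Kᴴ * X * K) * K⁻¹‖ := by
        rw [← Matrix.mul_assoc, ← Matrix.mul_assoc, h₁, Matrix.one_mul, Matrix.mul_assoc, h₂,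
          Matrix.mul_one]
    _ ≤ ‖(K⁻¹)ᴴ‖ * ‖Kᴴ * X * K‖ * ‖K⁻¹‖ := norm_mul₃_le
    _ = ‖K⁻¹‖ * ‖K⁻¹‖ * ‖Kᴴ * X * K‖ := by rw [l2_opNorm_conjTranspose]; ring

theorem l2_opNorm_sub_mul_mul_conjTranspose_le {K : Matrix m m ℂ} (hK : IsUnit K)
    (H D : Matrix m m ℂ) :
    ‖H - K * D * Kᴴ‖ ≤ ‖K⁻¹‖ * ‖K⁻¹‖ *
      (‖Kᴴ * H * K - D‖ + ‖D‖ * (2 * ‖Kᴴ * K - 1‖ + ‖Kᴴ * K - 1‖ ^ 2)) := by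
  set E := Kᴴ * K - 1
  have hconj : Kᴴ * (H - K * D * Kᴴ) * K = (Kᴴ * H * K - D) - (E * D + D * E + E * D * E) := by
    simp only [E]
    noncomm_ring
  have hpert : ‖E * D + D * E + E * D * E‖ ≤ ‖D‖ * (2 * ‖E‖ + ‖E‖ ^ 2) := by
    grw [norm_add₃_le, norm_mul_le, norm_mul_le D, norm_mul₃_le]
    nlinarith [norm_nonneg D, norm_nonneg E]
  grw [l2_opNorm_le_nonsing_inv_sq_mul_congr hK, hconj, norm_sub_le, hpert]

end Matrix

theorem Matrix.IsHermitian.norm_trace_mul_sq {m : Type*} [Fintype m] {A B : Matrix m m ℂ}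
    (hA : A.IsHermitian) (hB : B.IsHermitian) : ‖trace (A * B)‖ ^ 2 = (trace (A * B)).re ^ 2 := by
  have hreal : conj (trace (A * B)) = trace (A * B) := by
    rw [← star_def, ← trace_conjTranspose, conjTranspose_mul, hA.eq, hB.eq, trace_mul_comm]
  rw [Complex.sq_norm, Complex.normSq_apply, Complex.conj_eq_iff_im.mp hreal]
  ring

theorem Fin.prod_ite_two_zero {n : ℕ} (p : Fin n → Prop) [DecidablePred p] :
    ∏ k, (if p k then (2 : ℂ) else 0) = if ∀ k, p k then 2 ^ n else 0 := by
  simp [Finset.prod_ite_zero]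

def IsPauliPhase (z : ℂ) : Prop :=
  z = 1 ∨ z = -1 ∨ z = I ∨ z = -I

theorem IsPauliPhase.mul {z w : ℂ} (hz : IsPauliPhase z) (hw : IsPauliPhase w) :
    IsPauliPhase (z * w) := by
  unfold IsPauliPhase at *
  rcases hz with rfl | rfl | rfl | rfl <;> rcases hw with rfl | rfl | rfl | rfl <;> simp

theorem IsPauliPhase.prod {ι : Type*} (s : Finset ι) {f : ι → ℂ}
    (hf : ∀ k ∈ s, IsPauliPhase (f k)) : IsPauliPhase (∏ k ∈ s, f k) :=
  Finset.prod_induction f IsPauliPhase (fun _ _ => IsPauliPhase.mul) (Or.inl rfl) hf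

def pauliMulPhase (a b : Fin 4) : ℂ :=
  if (a = 1 ∧ b = 2) ∨ (a = 2 ∧ b = 3) ∨ (a = 3 ∧ b = 1) then I
  else if (a = 2 ∧ b = 1) ∨ (a = 3 ∧ b = 2) ∨ (a = 1 ∧ b = 3) then -I
  else 1

theorem isPauliPhase_pauliMulPhase (a b : Fin 4) : IsPauliPhase (pauliMulPhase a b) := by
  unfold IsPauliPhase pauliMulPhase
  split_ifs <;> simp

theorem pauli1_mul (a b : Fin 4) :
    pauli1 a * pauli1 b = pauliMulPhase a b • pauli1 (a ^^^ b) := by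
  fin_cases a <;> fin_cases b <;>
    · ext i j
      fin_cases i <;> fin_cases j <;> simp [pauli1, pauliMulPhase, mul_apply, Fin.sum_univ_two]

theorem pauli1_conjTranspose (a : Fin 4) : (pauli1 a)ᴴ = pauli1 a := by
  fin_cases a <;>
    · ext i j
      fin_cases i <;> fin_cases j <;> simp [pauli1]

theorem trace_pauli1 (a : Fin 4) : trace (pauli1 a) = if a = 0 then 2 else 0 := by
  fin_cases a <;> simp [pauli1, trace, Fin.sum_univ_two]

theorem trace_pauli1_mul_pauli1 (a b : Fin 4) :
    trace (pauli1 a * pauli1 b) = if a = b then 2 else 0 := by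
  fin_cases a <;> fin_cases b <;> simp [pauli1, trace, Fin.sum_univ_two] <;> norm_num

theorem sum_pauli1_apply_mul_apply (p q r s : Fin 2) :
    ∑ a, pauli1 a p q * pauli1 a r s = if p = s ∧ q = r then 2 else 0 := by
  fin_cases p <;> fin_cases q <;> fin_cases r <;> fin_cases s <;>
    simp [pauli1, Fin.sum_univ_four] <;> norm_num

theorem sum_diag_pauli1_apply_mul_apply (p q r s : Fin 2) :
    ∑ a ∈ {0, 3}, pauli1 a p q * pauli1 a r s = if p = q ∧ r = s ∧ p = r then 2 else 0 := by
  fin_cases p <;> fin_cases q <;> fin_cases r <;> fin_cases s <;> simp [pauli1] <;> norm_num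

section PauliStrings

variable {n : ℕ}

theorem pauliOp_eq_piTensor (s : Fin n → Fin 4) : pauliOp s = piTensor fun k => pauli1 (s k) :=
  rfl

theorem pauliOp_zero : pauliOp (fun _ : Fin n => (0 : Fin 4)) = 1 := by
  simpa [pauliOp_eq_piTensor, pauli1] using piTensor_one

theorem pauliOp_conjTranspose (s : Fin n → Fin 4) : (pauliOp s)ᴴ = pauliOp s := by
  simp only [pauliOp_eq_piTensor, conjTranspose_piTensor, pauli1_conjTranspose]

theorem pauliOp_mul (s t : Fin n → Fin 4) :
    pauliOp s * pauliOp t =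
      (∏ k, pauliMulPhase (s k) (t k)) • pauliOp fun k => s k ^^^ t k := by
  simp only [pauliOp_eq_piTensor, piTensor_mul, pauli1_mul, piTensor_smul]

theorem trace_pauliOp (s : Fin n → Fin 4) :
    trace (pauliOp s) = if s = (fun _ => 0) then 2 ^ n else 0 := by
  simp only [pauliOp_eq_piTensor, trace_piTensor, trace_pauli1, Fin.prod_ite_two_zero, funext_iff]

theorem trace_pauliOp_mul_pauliOp (s t : Fin n → Fin 4) :
    trace (pauliOp s * pauliOp t) = if s = t then 2 ^ n else 0 := by
  simp only [pauliOp_eq_piTensor, piTensor_mul, trace_piTensor, trace_pauli1_mul_pauli1,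
    Fin.prod_ite_two_zero, funext_iff]

theorem exists_pauliOp_mul_eq_smul_of_trace_ne_zero {s t u : Fin n → Fin 4}
    (h : trace (pauliOp s * pauliOp t * pauliOp u) ≠ 0) :
    ∃ c, IsPauliPhase c ∧ pauliOp s * pauliOp t = c • pauliOp u := by
  rw [pauliOp_mul, smul_mul_assoc, trace_smul, trace_pauliOp_mul_pauliOp] at h
  refine ⟨∏ k, pauliMulPhase (s k) (t k),
    IsPauliPhase.prod _ fun k _ => isPauliPhase_pauliMulPhase (s k) (t k), ?_⟩
  rw [pauliOp_mul]
  split_ifs at h with hu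
  · rw [hu]
  · simp at h

theorem sum_pauliOp_apply_mul_apply (i j k l : Fin n → Fin 2) :
    ∑ s, pauliOp s i j * pauliOp s k l = if i = l ∧ j = k then 2 ^ n else 0 := by
  simp only [pauliOp, of_apply, ← Finset.prod_mul_distrib]
  rw [← Fintype.prod_sum (fun q a => pauli1 a (i q) (j q) * pauli1 a (k q) (l q))]
  simp only [sum_pauli1_apply_mul_apply, Fin.prod_ite_two_zero, forall_and, funext_iff]

theorem DiagStrings_eq_piFinset : DiagStrings n = Fintype.piFinset fun _ => {0, 3} := by
  ext s
  simp [DiagStrings]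

theorem sum_diagStrings_pauliOp_apply_mul_apply (i j k l : Fin n → Fin 2) :
    ∑ s ∈ DiagStrings n, pauliOp s i j * pauliOp s k l =
      if i = j ∧ k = l ∧ i = k then 2 ^ n else 0 := by
  simp only [pauliOp, of_apply, ← Finset.prod_mul_distrib, DiagStrings_eq_piFinset]
  rw [Finset.sum_prod_piFinset _ (fun q a => pauli1 a (i q) (j q) * pauli1 a (k q) (l q))]
  simp only [sum_diag_pauli1_apply_mul_apply, Fin.prod_ite_two_zero, forall_and, funext_iff]

theorem notMem_G1_iff {s : Fin n → Fin 4} : s ∉ G1 n ↔ s ∈ DiagStrings n := by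
  simp only [G1, DiagStrings, Finset.mem_filter, Finset.mem_univ, true_and, not_exists]
  exact forall_congr' fun k => by generalize s k = a; fin_cases a <;> simp

theorem pauliOp_apply_self_eq_zero_of_mem_G1 {s : Fin n → Fin 4} (hs : s ∈ G1 n)
    (i : Fin n → Fin 2) : pauliOp s i i = 0 := by
  obtain ⟨k, hk⟩ := (Finset.mem_filter.mp hs).2
  refine Finset.prod_eq_zero (Finset.mem_univ k) ?_
  rcases hk with hk | hk <;> rw [hk] <;> generalize i k = b <;> fin_cases b <;> simp [pauli1]

theorem pauliOp_apply_eq_zero_of_mem_DiagStrings {s : Fin n → Fin 4} (hs : s ∈ DiagStrings n)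
    {i j : Fin n → Fin 2} (hij : i ≠ j) : pauliOp s i j = 0 := by
  obtain ⟨k, hk⟩ := Function.ne_iff.mp hij
  refine Finset.prod_eq_zero (Finset.mem_univ k) ?_
  rcases (Finset.mem_filter.mp hs).2 k with h | h <;> rw [h] <;> revert hk <;>
    generalize i k = b <;> generalize j k = c <;> fin_cases b <;> fin_cases c <;> simp [pauli1]

end PauliStrings

section PauliExpansion

variable {n : ℕ}

theorem trace_mul_pauliOp (A : Matrix (Fin n → Fin 2) (Fin n → Fin 2) ℂ) (s : Fin n → Fin 4) :
    trace (A * pauliOp s) = ∑ i, ∑ j, A i j * pauliOp s j i := by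
  simp [trace, mul_apply]

theorem sum_norm_trace_mul_pauliOp_sq (A : Matrix (Fin n → Fin 2) (Fin n → Fin 2) ℂ) :
    ∑ s, ‖trace (A * pauliOp s)‖ ^ 2 = 2 ^ n * frobNorm A ^ 2 := by
  have key : ∑ s, trace (A * pauliOp s) * conj (trace (A * pauliOp s)) =
      2 ^ n * ∑ i, ∑ j, A i j * conj (A i j) := by
    have hconj : ∀ s, conj (trace (A * pauliOp s)) = ∑ k, ∑ l, conj (A k l) * pauliOp s k l := by
      intro s
      simp only [trace_mul_pauliOp, map_sum, map_mul]
      congr! 3 with k _ l _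
      rw [← star_def, ← conjTranspose_apply, pauliOp_conjTranspose]
    calc _ = ∑ s, ∑ i, ∑ j, ∑ k, ∑ l,
          A i j * pauliOp s j i * (conj (A k l) * pauliOp s k l) := by
          refine Finset.sum_congr rfl fun s _ => ?_
          rw [hconj, trace_mul_pauliOp]
          simp only [Finset.sum_mul]
          simp only [Finset.mul_sum]
      _ = ∑ i, ∑ j, ∑ k, ∑ l, A i j * conj (A k l) * ∑ s, pauliOp s j i * pauliOp s k l := by
          rw [Finset.sum_comm]; congr! 2 with i
          rw [Finset.sum_comm]; congr! 2 with j
          rw [Finset.sum_comm]; congr! 2 with k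
          rw [Finset.sum_comm]; congr! 2 with l
          rw [Finset.mul_sum]
          exact Finset.sum_congr rfl fun s _ => by ring
      _ = _ := by
          simp [sum_pauliOp_apply_mul_apply, Finset.mul_sum, mul_comm, ite_and]
  simp only [Complex.mul_conj'] at key
  rw [frobNorm_sq]
  exact_mod_cast key

theorem sum_G1_re_trace_mul_pauliOp_sq {A : Matrix (Fin n → Fin 2) (Fin n → Fin 2) ℂ}
    (hA : A.IsHermitian) :
    ∑ s ∈ G1 n, (trace (A * pauliOp s)).re ^ 2 =
      2 ^ n * frobNorm (A - diagonal fun i => A i i) ^ 2 := by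
  rw [← sum_norm_trace_mul_pauliOp_sq]
  refine Finset.sum_subset_zero_on_sdiff (Finset.subset_univ _) ?_ fun s hs => ?_
  · intro s hs
    have hdiag := notMem_G1_iff.mp (Finset.mem_sdiff.mp hs).2
    have hzero : ∀ i, ∑ j, (A - diagonal fun i => A i i) i j * pauliOp s j i = 0 := by
      intro i
      rw [Finset.sum_eq_single i (fun j _ hji => by
        rw [pauliOp_apply_eq_zero_of_mem_DiagStrings hdiag hji, mul_zero]) (by simp)]
      simp
    rw [trace_mul_pauliOp, Finset.sum_eq_zero fun i _ => hzero i, norm_zero, sq, zero_mul]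
  · have hD : trace ((diagonal fun i => A i i) * pauliOp s) = 0 := by
      simp [trace, diagonal_mul, pauliOp_apply_self_eq_zero_of_mem_G1 hs]
    rw [sub_mul, trace_sub, hD, sub_zero, hA.norm_trace_mul_sq (pauliOp_conjTranspose s)]

theorem smul_sum_diagStrings_trace_mul_pauliOp_smul
    (A : Matrix (Fin n → Fin 2) (Fin n → Fin 2) ℂ) :
    ((2 : ℂ) ^ n)⁻¹ • ∑ s ∈ DiagStrings n, trace (A * pauliOp s) • pauliOp s =
      diagonal fun i => A i i := by
  ext i j
  have hswap : ∑ s ∈ DiagStrings n, trace (A * pauliOp s) * pauliOp s i j =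
      ∑ k, ∑ l, A k l * ∑ s ∈ DiagStrings n, pauliOp s l k * pauliOp s i j := by
    simp only [trace_mul_pauliOp, Finset.sum_mul, Finset.mul_sum, mul_assoc]
    rw [Finset.sum_comm]; congr! 2 with k
    rw [Finset.sum_comm]
  simp only [Matrix.smul_apply, Matrix.sum_apply, smul_eq_mul, hswap,
    sum_diagStrings_pauliOp_apply_mul_apply]
  by_cases hij : i = j
  · subst hij
    simp only [true_and, ite_and, mul_ite, mul_zero, Finset.sum_ite_eq', Finset.mem_univ,
      if_true, diagonal_apply_eq]
    field_simp
  · simp [hij]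

end PauliExpansion

theorem Matrix.conjTranspose_sum_smul_mul_sum_smul {ι m α : Type*} [Fintype ι] [Fintype m]
    [CommSemiring α] [StarRing α] (c : ι → α) (A : ι → Matrix m m α) :
    (∑ j, c j • A j)ᴴ * (∑ j, c j • A j) = ∑ i, ∑ j, (star (c i) * c j) • ((A i)ᴴ * A j) := by
  simp only [conjTranspose_sum, conjTranspose_smul, Finset.sum_mul_sum, smul_mul_smul_comm]

theorem Complex.star_mul_self_ofReal_mul_exp (r θ : ℝ) :
    star ((r : ℂ) * exp (I * θ)) * ((r : ℂ) * exp (I * θ)) = (r : ℂ) ^ 2 := by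
  rw [mul_comm, star_def, Complex.mul_conj', norm_mul, mul_comm I, Complex.norm_exp_ofReal_mul_I,
    mul_one, Complex.norm_real, Real.norm_eq_abs]
  norm_cast
  exact sq_abs r

section Kmat

variable {n d : ℕ} (P : Fin d → Fin n → Fin 4) (x : (Fin d → ℝ) × (Fin d → ℝ))

theorem trace_Kmat_conjTranspose_mul_self_mul_pauliOp (Q : Fin n → Fin 4) :
    trace ((Kmat P x)ᴴ * Kmat P x * pauliOp Q) =
      ∑ i, ∑ j, star ((x.1 i : ℂ) * exp (I * x.2 i)) * ((x.1 j : ℂ) * exp (I * x.2 j)) *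
        trace (pauliOp (P i) * pauliOp (P j) * pauliOp Q) := by
  simp only [Kmat, conjTranspose_sum_smul_mul_sum_smul, pauliOp_conjTranspose, Finset.sum_mul,
    trace_sum, smul_mul_assoc, trace_smul, smul_eq_mul]

theorem trace_Kmat_conjTranspose_mul_self (hP : Function.Injective P) :
    trace ((Kmat P x)ᴴ * Kmat P x) = 2 ^ n * ∑ j, (x.1 j : ℂ) ^ 2 := by
  rw [← mul_one ((Kmat P x)ᴴ * Kmat P x), ← pauliOp_zero,
    trace_Kmat_conjTranspose_mul_self_mul_pauliOp]
  simp only [mul_one, pauliOp_zero, trace_pauliOp_mul_pauliOp, hP.eq_iff, mul_ite, mul_zero,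
    Finset.sum_ite_eq, Finset.mem_univ, if_true, Finset.mul_sum]
  refine Finset.sum_congr rfl fun j _ => ?_
  rw [Complex.star_mul_self_ofReal_mul_exp, mul_comm]

theorem trace_Kmat_conjTranspose_mul_self_mul_pauliOp_eq_zero {Q : Fin n → Fin 4}
    (hQ0 : Q ≠ fun _ => 0) (hQ : Q ∉ G2 P) :
    trace ((Kmat P x)ᴴ * Kmat P x * pauliOp Q) = 0 := by
  rw [trace_Kmat_conjTranspose_mul_self_mul_pauliOp]
  refine Finset.sum_eq_zero fun i _ => Finset.sum_eq_zero fun j _ => ?_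
  by_contra hne
  obtain ⟨c, hc, hPQ⟩ := exists_pauliOp_mul_eq_smul_of_trace_ne_zero (right_ne_zero_of_mul hne)
  exact hQ (Finset.mem_filter.mpr ⟨Finset.mem_univ _, hQ0, i, j, c, hc, hPQ⟩)

theorem frobNorm_Kmat_conjTranspose_mul_self_sub_one_sq (hP : Function.Injective P)
    (hx : ∑ j, x.1 j ^ 2 = 1) :
    frobNorm ((Kmat P x)ᴴ * Kmat P x - 1) ^ 2 = 2 ^ n * ∑ Q ∈ G2 P, phi P Q x ^ 2 := by
  set E := (Kmat P x)ᴴ * Kmat P x - 1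
  have htrace : ∀ Q, trace (E * pauliOp Q) =
      trace ((Kmat P x)ᴴ * Kmat P x * pauliOp Q) - trace (pauliOp Q) := by
    intro Q
    rw [sub_mul, trace_sub, one_mul]
  have hout : ∀ Q ∉ G2 P, trace (E * pauliOp Q) = 0 := by
    intro Q hQ
    by_cases hQ0 : Q = fun _ => 0
    · rw [htrace, hQ0, pauliOp_zero, mul_one, trace_Kmat_conjTranspose_mul_self P x hP, trace_one]
      simp [← Complex.ofReal_pow, ← Complex.ofReal_sum, hx]
    · rw [htrace, trace_Kmat_conjTranspose_mul_self_mul_pauliOp_eq_zero P x hQ0 hQ, trace_pauliOp,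
        if_neg hQ0, sub_zero]
  have hin : ∀ Q ∈ G2 P, ‖trace (E * pauliOp Q)‖ ^ 2 = (2 ^ n * phi P Q x) ^ 2 := by
    intro Q hQ
    have hQ0 : Q ≠ fun _ => 0 := (Finset.mem_filter.mp hQ).2.1
    have hKK : ((Kmat P x)ᴴ * Kmat P x).IsHermitian := isHermitian_conjTranspose_mul_self _
    rw [htrace, trace_pauliOp, if_neg hQ0, sub_zero,
      hKK.norm_trace_mul_sq (pauliOp_conjTranspose Q), phi]
    field_simp
  have hparseval := sum_norm_trace_mul_pauliOp_sq E
  rw [← Finset.sum_subset (Finset.subset_univ (G2 P)) fun Q _ hQ => by rw [hout Q hQ, norm_zero,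
    sq, zero_mul], Finset.sum_congr rfl hin] at hparseval
  have h2n : (2 : ℝ) ^ n ≠ 0 := by positivity
  apply mul_left_cancel₀ h2n
  rw [← hparseval, Finset.mul_sum, Finset.mul_sum]
  exact Finset.sum_congr rfl fun Q _ => by ring

theorem l2_opNorm_Kmat_conjTranspose_mul_self_sub_one_le (hP : Function.Injective P)
    (hx : ∑ j, x.1 j ^ 2 = 1) {ε : ℝ} (hφ : ∑ Q ∈ G2 P, phi P Q x ^ 2 ≤ ε / 2 ^ n) :
    ‖(Kmat P x)ᴴ * Kmat P x - 1‖ ≤ √ε := by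
  refine (l2_opNorm_le_frobNorm _).trans ((le_abs_self _).trans (Real.abs_le_sqrt ?_))
  rw [frobNorm_Kmat_conjTranspose_mul_self_sub_one_sq P x hP hx]
  calc (2 : ℝ) ^ n * ∑ Q ∈ G2 P, phi P Q x ^ 2 ≤ 2 ^ n * (ε / 2 ^ n) := by gcongr
    _ = ε := by field_simp

theorem l2_opNorm_Kmat_sub_diagonal_le {H : Matrix (Fin n → Fin 2) (Fin n → Fin 2) ℂ}
    (hH : H.IsHermitian) :
    ‖(Kmat P x)ᴴ * H * Kmat P x - diagonal fun i => ((Kmat P x)ᴴ * H * Kmat P x) i i‖ ≤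
      √(totalF H P x / 2 ^ n) := by
  refine (l2_opNorm_le_frobNorm _).trans ((le_abs_self _).trans (Real.abs_le_sqrt ?_))
  have hcost := sum_G1_re_trace_mul_pauliOp_sq (isHermitian_conjTranspose_mul_mul (Kmat P x) hH)
  rw [le_div_iff₀ (by positivity), mul_comm, ← hcost, totalF]
  exact le_add_of_nonneg_right (Finset.sum_nonneg fun Q _ => sq_nonneg (phi P Q x))

end Kmat

theorem statement10_general {n d : ℕ}
    (H : Matrix (Fin n → Fin 2) (Fin n → Fin 2) ℂ) (hH : H.IsHermitian)
    (P : Fin d → Fin n → Fin 4) (hP : Function.Injective P)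
    (x : (Fin d → ℝ) × (Fin d → ℝ)) (hx : ∑ j, x.1 j ^ 2 = 1)
    (ε : ℝ) (hε1 : ε ≤ 1 / 4)
    (hφ : ∑ Q ∈ G2 P, phi P Q x ^ 2 ≤ ε / 2 ^ n) :
    specNorm (H - Kmat P x * h0 H P x * (Kmat P x)ᴴ) ≤
      2 * Real.sqrt (totalF H P x / 2 ^ n) + 9 * frobNorm H * Real.sqrt ε := by
  set K := Kmat P x
  set M := Kᴴ * H * K
  set D := diagonal fun i => M i i
  set e := ‖Kᴴ * K - 1‖
  have he : e ≤ √ε := l2_opNorm_Kmat_conjTranspose_mul_self_sub_one_le P x hP hx hφ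
  have hε : √ε ≤ 1 / 2 := (Real.sqrt_le_left (by norm_num)).mpr (by linarith)
  have hK : IsUnit K := isUnit_of_norm_conjTranspose_mul_self_sub_one_lt (by linarith)
  have hKinv : ‖K⁻¹‖ * ‖K⁻¹‖ ≤ 2 := by
    grw [l2_opNorm_nonsing_inv_mul_self_le (by linarith)]
    rw [inv_le_comm₀ (by linarith) (by norm_num)]
    linarith
  have hH₀ := frobNorm_nonneg H
  have hD : ‖D‖ ≤ 3 / 2 * frobNorm H := by
    grw [l2_opNorm_diagonal_diag_le, l2_opNorm_conjTranspose_mul_mul_le, l2_opNorm_le_frobNorm H]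
    nlinarith
  have hMD : ‖M - D‖ ≤ √(totalF H P x / 2 ^ n) := l2_opNorm_Kmat_sub_diagonal_le P x hH
  rw [specNorm, ← cstar_norm_def, h0, smul_sum_diagStrings_trace_mul_pauliOp_smul]
  calc _ ≤ ‖K⁻¹‖ * ‖K⁻¹‖ * (‖M - D‖ + ‖D‖ * (2 * e + e ^ 2)) :=
        l2_opNorm_sub_mul_mul_conjTranspose_le hK H D
    _ ≤ 2 * (√(totalF H P x / 2 ^ n) + 3 / 2 * frobNorm H * (5 / 2 * √ε)) := by
        gcongr
        nlinarith [norm_nonneg (Kᴴ * K - 1)]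
    _ ≤ 2 * √(totalF H P x / 2 ^ n) + 9 * frobNorm H * √ε := by
        nlinarith [Real.sqrt_nonneg ε]

/-- a posteriori error bound: if `‖r‖ = 1`, `0 ≤ ε ≤ 1/4` and the
orthogonality part of the cost is at most `ε/2ⁿ`, then with `H̃ = K h₀ K†` one has
`‖H − H̃‖₂ ≤ 2 √(F(r,θ)/2ⁿ) + 9 ‖H‖_F √ε`. -/
theorem statement10 {n d : ℕ} (hn : 1 ≤ n)
    (H : Matrix (Fin n → Fin 2) (Fin n → Fin 2) ℂ) (hH : H.IsHermitian)
    (P : Fin d → Fin n → Fin 4) (hP : Function.Injective P)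
    (x : (Fin d → ℝ) × (Fin d → ℝ)) (hx : ∑ j, x.1 j ^ 2 = 1)
    (ε : ℝ) (hε0 : 0 ≤ ε) (hε1 : ε ≤ 1 / 4)
    (hφ : ∑ Q ∈ G2 P, phi P Q x ^ 2 ≤ ε / 2 ^ n) :
    specNorm (H - Kmat P x * h0 H P x * (Kmat P x)ᴴ) ≤
      2 * Real.sqrt (totalF H P x / 2 ^ n) + 9 * frobNorm H * Real.sqrt ε :=
  statement10_general H hH P hP x hx ε hε1 hφ
end

section
/- If ‖r‖ = 1, then for every a ∈ ℝ, ‖r − a·∇_r F(r,θ)‖² = 1 − 8a·F(r,θ) + a²·‖∇_r F(r,θ)‖², where ∇_r F = (∂F/∂r₁, …, ∂F/∂r_d) denotes the gradient of F in the radial variables. -/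
open Matrix Complex
open scoped Classical

/-! F is a sum of squares of real parts of traces `tr (Kᴴ B K A)`, and `K` is linear in `r`, so
`F(t r, θ) = t⁴ F(r, θ)`. Euler's identity for homogeneous functions then gives
`⟪r, ∇_r F⟫ = 4 F`, and expanding `‖r − a ∇_r F‖²` with `‖r‖ = 1` yields the claim. -/

theorem HasFDerivAt.apply_fst_eq_of_homogeneous {E F G : Type*}
    [NormedAddCommGroup E] [NormedSpace ℝ E] [NormedAddCommGroup F] [NormedSpace ℝ F]
    [NormedAddCommGroup G] [NormedSpace ℝ G] {f : E × F → G} {f' : E × F →L[ℝ] G}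
    {u : E} {v : F} {k : ℕ} (hf : HasFDerivAt f f' (u, v))
    (hom : ∀ t : ℝ, f (t • u, v) = t ^ k • f (u, v)) :
    f' (u, 0) = (k : ℝ) • f (u, v) := by
  have hcurve : HasDerivAt (fun t : ℝ => (t • u, v)) (u, 0) 1 := by
    simpa using ((hasDerivAt_id (1 : ℝ)).smul_const u).prodMk (hasDerivAt_const (1 : ℝ) v)
  have hcomp : HasDerivAt (fun t : ℝ => f (t • u, v)) (f' (u, 0)) 1 :=
    (by simpa using hf : HasFDerivAt f f' ((1 : ℝ) • u, v)).comp_hasDerivAt 1 hcurve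
  have hpow : HasDerivAt (fun t : ℝ => t ^ k • f (u, v)) ((k : ℝ) • f (u, v)) 1 := by
    simpa using (hasDerivAt_pow k (1 : ℝ)).smul_const (f (u, v))
  exact (funext hom ▸ hcomp).unique hpow

theorem ContinuousLinearMap.apply_prod_zero_eq_sum {ι F G : Type*} [Fintype ι] [DecidableEq ι]
    [NormedAddCommGroup F] [NormedSpace ℝ F] [NormedAddCommGroup G] [NormedSpace ℝ G]
    (L : (ι → ℝ) × F →L[ℝ] G) (r : ι → ℝ) :
    L (r, 0) = ∑ j, r j • L (Pi.single j 1, 0) := by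
  have hr : (r, (0 : F)) = ∑ j, r j • ((Pi.single j 1 : ι → ℝ), (0 : F)) :=
    Prod.ext (by simpa [Prod.fst_sum] using pi_eq_sum_univ' r) (by simp [Prod.snd_sum])
  simp only [hr, map_sum, map_smul]

theorem sum_sub_mul_sq {ι : Type*} (s : Finset ι) (r g : ι → ℝ) (a : ℝ) :
    ∑ j ∈ s, (r j - a * g j) ^ 2 =
      ∑ j ∈ s, r j ^ 2 - 2 * a * ∑ j ∈ s, r j * g j + a ^ 2 * ∑ j ∈ s, g j ^ 2 := by
  simp only [Finset.mul_sum, ← Finset.sum_sub_distrib, ← Finset.sum_add_distrib]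
  exact Finset.sum_congr rfl fun j _ => by ring

theorem Matrix.trace_conjTranspose_smul_mul_smul {m : Type*} [Fintype m]
    (K B A : Matrix m m ℂ) (t : ℝ) :
    (((t : ℂ) • K)ᴴ * B * ((t : ℂ) • K) * A).trace.re = t ^ 2 * (Kᴴ * B * K * A).trace.re := by
  simp only [conjTranspose_smul, smul_mul, Matrix.mul_smul, trace_smul, smul_eq_mul,
    Complex.star_def, Complex.conj_ofReal, Complex.re_ofReal_mul]
  ring

section Kmat

variable {n d : ℕ} (P : Fin d → Fin n → Fin 4)

theorem Kmat_smul_fst (x : (Fin d → ℝ) × (Fin d → ℝ)) (t : ℝ) :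
    Kmat P (t • x.1, x.2) = (t : ℂ) • Kmat P x := by
  simp only [Kmat, Finset.smul_sum, smul_smul, Pi.smul_apply, smul_eq_mul, Complex.ofReal_mul,
    mul_assoc]

theorem differentiable_Kmat_apply (i j : Fin n → Fin 2) :
    Differentiable ℝ (fun x => Kmat P x i j) := by
  simp only [Kmat, Matrix.sum_apply, Matrix.smul_apply, smul_eq_mul]
  fun_prop

theorem differentiable_re_trace_sandwich (B A : Matrix (Fin n → Fin 2) (Fin n → Fin 2) ℂ) :
    Differentiable ℝ (fun x => ((Kmat P x)ᴴ * B * Kmat P x * A).trace.re) := by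
  have := differentiable_Kmat_apply P
  simp only [Matrix.trace, Matrix.diag, Matrix.mul_apply, Matrix.conjTranspose_apply]
  fun_prop

theorem differentiable_totalF (H : Matrix (Fin n → Fin 2) (Fin n → Fin 2) ℂ) :
    Differentiable ℝ (totalF H P) := by
  have hphi (Q : Fin n → Fin 4) : Differentiable ℝ (phi P Q) := by
    unfold phi
    simpa only [Matrix.mul_one] using
      (differentiable_re_trace_sandwich P 1 (pauliOp Q)).const_mul ((1 : ℝ) / 2 ^ n)
  unfold totalF costf
  exact (Differentiable.fun_sum fun Q _ => (differentiable_re_trace_sandwich P H _).pow 2).add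
    (Differentiable.fun_sum fun Q _ => (hphi Q).pow 2)

theorem totalF_smul_fst (H : Matrix (Fin n → Fin 2) (Fin n → Fin 2) ℂ)
    (x : (Fin d → ℝ) × (Fin d → ℝ)) (t : ℝ) :
    totalF H P (t • x.1, x.2) = t ^ 4 * totalF H P x := by
  have hphi (Q : Fin n → Fin 4) : phi P Q (t • x.1, x.2) = t ^ 2 * phi P Q x := by
    have h := Matrix.trace_conjTranspose_smul_mul_smul (Kmat P x) 1 (pauliOp Q) t
    simp only [Matrix.mul_one] at h
    simp only [phi, Kmat_smul_fst, h]
    ring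
  simp only [totalF, costf, hphi, Kmat_smul_fst, Matrix.trace_conjTranspose_smul_mul_smul,
    mul_add, Finset.mul_sum]
  congr 1 <;> exact Finset.sum_congr rfl fun Q _ => by ring

end Kmat

theorem statement15_general {n d : ℕ}
    (H : Matrix (Fin n → Fin 2) (Fin n → Fin 2) ℂ)
    (P : Fin d → Fin n → Fin 4)
    (x : (Fin d → ℝ) × (Fin d → ℝ)) (hx : ∑ j, x.1 j ^ 2 = 1) (a : ℝ) :
    ∑ j, (x.1 j - a * fderiv ℝ (totalF H P) x (Pi.single j 1, 0)) ^ 2 =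
      1 - 8 * a * totalF H P x +
        a ^ 2 * ∑ j, (fderiv ℝ (totalF H P) x (Pi.single j 1, 0)) ^ 2 := by
  have heuler : fderiv ℝ (totalF H P) x (x.1, 0) = 4 * totalF H P x := by
    simpa using ((differentiable_totalF P H x).hasFDerivAt).apply_fst_eq_of_homogeneous
      (k := 4) fun t => by simpa using totalF_smul_fst P H x t
  rw [ContinuousLinearMap.apply_prod_zero_eq_sum] at heuler
  simp only [smul_eq_mul] at heuler
  rw [sum_sub_mul_sq, hx, heuler]
  ring

/-- if `‖r‖ = 1`, then for every `a ∈ ℝ`,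
`‖r − a ∇_r F(r,θ)‖² = 1 − 8a F(r,θ) + a² ‖∇_r F(r,θ)‖²`, where the `j`-th component of
`∇_r F` is the partial derivative of `F` in the direction of the `j`-th radial coordinate. -/
theorem statement15 {n d : ℕ} (hn : 1 ≤ n)
    (H : Matrix (Fin n → Fin 2) (Fin n → Fin 2) ℂ) (hH : H.IsHermitian)
    (P : Fin d → Fin n → Fin 4) (hP : Function.Injective P)
    (x : (Fin d → ℝ) × (Fin d → ℝ)) (hx : ∑ j, x.1 j ^ 2 = 1) (a : ℝ) :
    ∑ j, (x.1 j - a * fderiv ℝ (totalF H P) x (Pi.single j 1, 0)) ^ 2 =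
      1 - 8 * a * totalF H P x +
        a ^ 2 * ∑ j, (fderiv ℝ (totalF H P) x (Pi.single j 1, 0)) ^ 2 :=
  statement15_general H P x hx a
end
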